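/- Time-reversal antisymmetry of the Berry curvature: let φ : ℝ² → H be a C² family of unit vectors in a complex Hilbert space and suppose there exists an antiunitary C with C² = Id such that φ(−k) = e^{iθ(k)} C φ(k) for some smooth real phase θ. Then the Berry curvature Ω(k) = ∂₁𝒜₂(k) − ∂₂𝒜₁(k), with 𝒜_j = i⟨φ, ∂_j φ⟩, satisfies Ω(−k) = −Ω(k). -/

import Mathlib

/-!
A gauge change `φ ↦ e^{iθ} φ` shifts the Berry connection `𝒜 = i⟪φ, dφ⟫` by the exact form
`-dθ`, so it leaves the curvature `Ω = d𝒜` unchanged because the mixed partials of `θ` commute.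
Reflecting `k ↦ -k` negates both the argument and the connection, and so moves `Ω` from `k` to
`-k` without changing its sign. An antiunitary `C` sends `i⟪φ, ∂φ⟫` to `i⟪∂φ, φ⟫`. This is
`-i⟪φ, ∂φ⟫`, since `Re⟪φ, ∂φ⟫ = 0` for unit vectors. Hence `Ω(-k)` is the curvature of
`e^{iθ} Cφ` at `k`, which is `Ω_{Cφ}(k) = -Ω(k)`.
-/

open Complex
open scoped InnerProductSpace ComplexConjugate

section Antiunitary

variable {H : Type*} [NormedAddCommGroup H] [InnerProductSpace ℂ H]

theorem norm_map_of_inner_map_map_swap {C : H → H}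
    (hC : ∀ x y, ⟪C x, C y⟫_ℂ = ⟪y, x⟫_ℂ) (x : H) : ‖C x‖ = ‖x‖ := by
  have h : ‖C x‖ ^ 2 = ‖x‖ ^ 2 := by
    rw [← inner_self_eq_norm_sq (𝕜 := ℂ), ← inner_self_eq_norm_sq (𝕜 := ℂ) x, hC]
  simpa using h

/-- Additive and isometric, hence continuous and therefore `ℝ`-linear. -/
noncomputable def antiunitaryToRealCLM (C : H → H) (hadd : ∀ x y, C (x + y) = C x + C y)
    (hC : ∀ x y, ⟪C x, C y⟫_ℂ = ⟪y, x⟫_ℂ) : H →L[ℝ] H :=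
  let f : H →+ H := AddMonoidHom.mk' C hadd
  f.toRealLinearMap
    (AddMonoidHomClass.isometry_of_norm f (norm_map_of_inner_map_map_swap hC)).continuous

end Antiunitary

section Berry

variable {E H : Type*} [NormedAddCommGroup E] [NormedSpace ℝ E]
  [NormedAddCommGroup H] [InnerProductSpace ℂ H]

noncomputable def berryConnection (φ : E → H) (k v : E) : ℂ :=
  I * ⟪φ k, fderiv ℝ φ k v⟫_ℂ

noncomputable def berryCurvature (φ : E → H) (k u v : E) : ℂ :=
  fderiv ℝ (fun x => berryConnection φ x v) k u - fderiv ℝ (fun x => berryConnection φ x u) k v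

theorem inner_fderiv_add_inner_fderiv_eq_zero {φ : E → H} (hnorm : ∀ x, ⟪φ x, φ x⟫_ℂ = 1)
    {k : E} (hφ : DifferentiableAt ℝ φ k) (v : E) :
    ⟪φ k, fderiv ℝ φ k v⟫_ℂ + ⟪fderiv ℝ φ k v, φ k⟫_ℂ = 0 := by
  rw [← fderiv_inner_apply ℂ hφ hφ, funext hnorm, fderiv_const_apply]
  rfl

theorem fderiv_comp_neg {F : Type*} [NormedAddCommGroup F] [NormedSpace ℝ F] (f : E → F)
    (k : E) : fderiv ℝ (fun x => f (-x)) k = -fderiv ℝ f (-k) := by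
  simpa using fderiv_comp_smul (𝕜 := ℝ) (f := f) (x := k) (-1)

theorem berryConnection_comp_neg (φ : E → H) (k v : E) :
    berryConnection (fun x => φ (-x)) k v = -berryConnection φ (-k) v := by
  simp [berryConnection, fderiv_comp_neg]

theorem berryConnection_antiunitary {φ : E → H} (hnorm : ∀ x, ⟪φ x, φ x⟫_ℂ = 1)
    {k : E} (hφ : DifferentiableAt ℝ φ k) (C : H →L[ℝ] H) (hC : ∀ x y, ⟪C x, C y⟫_ℂ = ⟪y, x⟫_ℂ)
    (v : E) : berryConnection (fun x => C (φ x)) k v = -berryConnection φ k v := by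
  have h := inner_fderiv_add_inner_fderiv_eq_zero hnorm hφ v
  simp only [berryConnection, fderiv_fun_comp k C.differentiableAt hφ, C.fderiv,
    ContinuousLinearMap.coe_comp, Function.comp_apply, hC]
  linear_combination I * h

theorem berryConnection_exp_smul {χ : E → H} {θ : E → ℝ} {k : E} (hnorm : ⟪χ k, χ k⟫_ℂ = 1)
    (hχ : DifferentiableAt ℝ χ k) (hθ : DifferentiableAt ℝ θ k) (v : E) :
    berryConnection (fun x => exp (I * θ x) • χ x) k v = berryConnection χ k v - fderiv ℝ θ k v := by
  have hphase : HasFDerivAt (fun x => exp (I * θ x))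
      (exp (I * θ k) • I • ofRealCLM.comp (fderiv ℝ θ k)) k :=
    ((ofRealCLM.hasFDerivAt.comp k hθ.hasFDerivAt).const_mul I).cexp
  have hunit : conj (exp (I * θ k)) * exp (I * θ k) = 1 := by
    rw [← exp_conj, ← exp_add, map_mul, conj_I, conj_ofReal]
    simp
  rw [berryConnection, berryConnection, (hphase.fun_smul hχ.hasFDerivAt).fderiv]
  simp only [add_apply, smul_apply, ContinuousLinearMap.smulRight_apply, ContinuousLinearMap.comp_apply, ofRealCLM_apply,
    inner_add_right, inner_smul_left, inner_smul_right, hnorm, smul_eq_mul]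
  linear_combination (I * ⟪χ k, fderiv ℝ χ k v⟫_ℂ - (fderiv ℝ θ k v : ℂ)) * hunit
    + (fderiv ℝ θ k v : ℂ) * conj (exp (I * θ k)) * exp (I * θ k) * I_sq

theorem ContDiff.differentiable_fderiv_apply {F : Type*} [NormedAddCommGroup F]
    [NormedSpace ℝ F] {f : E → F} (hf : ContDiff ℝ 2 f) (v : E) :
    Differentiable ℝ fun x => fderiv ℝ f x v :=
  ((hf.fderiv_right one_add_one_eq_two.le).clm_apply contDiff_const).differentiable one_ne_zero

theorem differentiable_berryConnection {φ : E → H} (hφ : ContDiff ℝ 2 φ) (v : E) :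
    Differentiable ℝ (fun x => berryConnection φ x v) :=
  ((hφ.differentiable two_ne_zero).inner ℂ (hφ.differentiable_fderiv_apply v)).const_mul I

theorem fderiv_fderiv_apply_comm {θ : E → ℝ} (hθ : ContDiff ℝ 2 θ) (k u v : E) :
    fderiv ℝ (fun x => fderiv ℝ θ x v) k u = fderiv ℝ (fun x => fderiv ℝ θ x u) k v := by
  have hθ' : DifferentiableAt ℝ (fderiv ℝ θ) k :=
    (hθ.fderiv_right one_add_one_eq_two.le).differentiable one_ne_zero k
  rw [fderiv_clm_apply hθ' (differentiableAt_const v),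
    fderiv_clm_apply hθ' (differentiableAt_const u)]
  simpa using (hθ.contDiffAt.isSymmSndFDerivAt (by simp)).eq u v

theorem berryCurvature_comp_neg (φ : E → H) (k u v : E) :
    berryCurvature (fun x => φ (-x)) k u v = berryCurvature φ (-k) u v := by
  have h (w : E) : fderiv ℝ (fun x => berryConnection (fun x => φ (-x)) x w) k
      = fderiv ℝ (fun x => berryConnection φ x w) (-k) := by
    simp only [berryConnection_comp_neg, fderiv_fun_neg,
      fderiv_comp_neg fun x => berryConnection φ x w, neg_neg]
  simp only [berryCurvature, h]

theorem berryCurvature_antiunitary {φ : E → H} (hnorm : ∀ x, ⟪φ x, φ x⟫_ℂ = 1)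
    (hφ : Differentiable ℝ φ) (C : H →L[ℝ] H) (hC : ∀ x y, ⟪C x, C y⟫_ℂ = ⟪y, x⟫_ℂ) (k u v : E) :
    berryCurvature (fun x => C (φ x)) k u v = -berryCurvature φ k u v := by
  simp only [berryCurvature, berryConnection_antiunitary hnorm (hφ _) C hC, fderiv_fun_neg,
    neg_apply]
  ring

theorem berryCurvature_exp_smul {χ : E → H} {θ : E → ℝ} (hnorm : ∀ x, ⟪χ x, χ x⟫_ℂ = 1)
    (hχ : ContDiff ℝ 2 χ) (hθ : ContDiff ℝ 2 θ) (k u v : E) :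
    berryCurvature (fun x => exp (I * θ x) • χ x) k u v = berryCurvature χ k u v := by
  have h (w : E) : fderiv ℝ (fun x => berryConnection (fun x => exp (I * θ x) • χ x) x w) k
      = fderiv ℝ (fun x => berryConnection χ x w) k
        - ofRealCLM.comp (fderiv ℝ (fun x => fderiv ℝ θ x w) k) := by
    simp only [berryConnection_exp_smul (hnorm _) ((hχ.differentiable two_ne_zero) _)
      ((hθ.differentiable two_ne_zero) _)]
    exact ((differentiable_berryConnection hχ w k).hasFDerivAt.sub
      (ofRealCLM.hasFDerivAt.comp k (hθ.differentiable_fderiv_apply w k).hasFDerivAt)).fderiv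
  simp only [berryCurvature, h, sub_apply, ContinuousLinearMap.comp_apply, ofRealCLM_apply,
    fderiv_fderiv_apply_comm hθ k u v]
  ring

theorem berryCurvature_neg_of_timeReversal {φ : E → H} (hφ : ContDiff ℝ 2 φ)
    (hnorm : ∀ x, ⟪φ x, φ x⟫_ℂ = 1) (C : H →L[ℝ] H) (hC : ∀ x y, ⟪C x, C y⟫_ℂ = ⟪y, x⟫_ℂ)
    {θ : E → ℝ} (hθ : ContDiff ℝ 2 θ) (hrel : ∀ k, φ (-k) = exp (I * θ k) • C (φ k))
    (k u v : E) : berryCurvature φ (-k) u v = -berryCurvature φ k u v := by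
  have hCφ : ContDiff ℝ 2 fun x => C (φ x) := C.contDiff.comp hφ
  have hnormCφ (x : E) : ⟪C (φ x), C (φ x)⟫_ℂ = 1 := by rw [hC, hnorm]
  calc berryCurvature φ (-k) u v
      = berryCurvature (fun x => exp (I * θ x) • C (φ x)) k u v := by
        rw [← berryCurvature_comp_neg, funext hrel]
    _ = berryCurvature (fun x => C (φ x)) k u v := berryCurvature_exp_smul hnormCφ hCφ hθ k u v
    _ = -berryCurvature φ k u v :=
        berryCurvature_antiunitary hnorm (hφ.differentiable two_ne_zero) C hC k u v

end Berry

theorem berry_curvature_time_reversal_odd_general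
    {H : Type*} [NormedAddCommGroup H] [InnerProductSpace ℂ H]
    (φ : EuclideanSpace ℝ (Fin 2) → H) (hφ : ContDiff ℝ 2 φ)
    (hnorm : ∀ k, (inner ℂ (φ k) (φ k) : ℂ) = 1)
    (C : H → H)
    (hCadd : ∀ x y, C (x + y) = C x + C y)
    (hCinner : ∀ x y : H, (inner ℂ (C x) (C y) : ℂ) = inner ℂ y x)
    (θ : EuclideanSpace ℝ (Fin 2) → ℝ) (hθ : ContDiff ℝ 2 θ)
    (hrel : ∀ k, φ (-k) = Complex.exp (Complex.I * (θ k : ℂ)) • C (φ k))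
    (A : Fin 2 → EuclideanSpace ℝ (Fin 2) → ℂ)
    (hA : ∀ j k, A j k =
      Complex.I * inner ℂ (φ k) (fderiv ℝ φ k (EuclideanSpace.single j 1)))
    (Ω : EuclideanSpace ℝ (Fin 2) → ℂ)
    (hΩ : ∀ k, Ω k = fderiv ℝ (A 1) k (EuclideanSpace.single 0 1) -
      fderiv ℝ (A 0) k (EuclideanSpace.single 1 1)) :
    ∀ k, Ω (-k) = -Ω k := by
  have hA' : A = fun j x => berryConnection φ x (EuclideanSpace.single j 1) := funext₂ hA
  subst hA'
  intro k
  rw [hΩ, hΩ]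
  exact berryCurvature_neg_of_timeReversal hφ hnorm (antiunitaryToRealCLM C hCadd hCinner) hCinner
    hθ hrel k _ _

/-- time-reversal antisymmetry of the Berry curvature. If
`φ(-k) = e^{iθ(k)} C φ(k)` for an antiunitary `C` with `C² = Id`, then the Berry
curvature `Ω = ∂₁𝒜₂ - ∂₂𝒜₁` satisfies `Ω(-k) = -Ω(k)`. -/
theorem berry_curvature_time_reversal_odd
    {H : Type*} [NormedAddCommGroup H] [InnerProductSpace ℂ H]
    (φ : EuclideanSpace ℝ (Fin 2) → H) (hφ : ContDiff ℝ 2 φ)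
    (hnorm : ∀ k, (inner ℂ (φ k) (φ k) : ℂ) = 1)
    (C : H → H)
    (hCadd : ∀ x y, C (x + y) = C x + C y)
    (hCsmul : ∀ (c : ℂ) (x : H), C (c • x) = (starRingEnd ℂ c) • C x)
    (hCinner : ∀ x y : H, (inner ℂ (C x) (C y) : ℂ) = inner ℂ y x)
    (hC2 : ∀ x, C (C x) = x)
    (θ : EuclideanSpace ℝ (Fin 2) → ℝ) (hθ : ContDiff ℝ 2 θ)
    (hrel : ∀ k, φ (-k) = Complex.exp (Complex.I * (θ k : ℂ)) • C (φ k))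
    (A : Fin 2 → EuclideanSpace ℝ (Fin 2) → ℂ)
    (hA : ∀ j k, A j k =
      Complex.I * inner ℂ (φ k) (fderiv ℝ φ k (EuclideanSpace.single j 1)))
    (Ω : EuclideanSpace ℝ (Fin 2) → ℂ)
    (hΩ : ∀ k, Ω k = fderiv ℝ (A 1) k (EuclideanSpace.single 0 1) -
      fderiv ℝ (A 0) k (EuclideanSpace.single 1 1)) :
    ∀ k, Ω (-k) = -Ω k :=
  berry_curvature_time_reversal_odd_general φ hφ hnorm C hCadd hCinner θ hθ hrel A hA Ω hΩ
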